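/- arXiv:2004.02012 — 2 statements merged into one kernel-verified Lean document; each statement's English description precedes it below -/
import Mathlib

section
/- If a traversal of the product graph from (x, s₀) reaches vertex v at state s₁ and later at state s₂ along the same path, and [s₁] ⊇ [s₂] holds (no conflict), then removing the cycle between the two occurrences of v yields a path in the product graph from (x, s₀) to a final node that visits v at most at state s₁ at that position, i.e., any accepted non-simple path whose repeated-vertex state pairs all satisfy suffix containment can be shortened to an accepted path with strictly fewer repeated vertices. -/
/-!
The DFA component of a product path is determined by its start state and its label, so the
suffix `w₃` leads `s₂` into `F`, i.e. `w₃ ∈ [s₂] ⊆ [s₁]`. Replaying the graph part of that suffix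
from state `s₁` therefore also ends in a final state, and prefixing it with the path to `(v, s₁)`
cuts out the cycle.
-/

/-- Extended transition function of a DFA. -/
def dstar {S A : Type*} (δ : S → A → S) (s : S) (w : List A) : S :=
  w.foldl δ s

/-- The suffix language `[s]` of a state `s`. -/
def suffixLang {S A : Type*} (δ : S → A → S) (F : Set S) (s : S) : Set (List A) :=
  { w | dstar δ s w ∈ F }

/-- A path in the product graph `P_{G,A}` with its label. -/
inductive PPath {V S A : Type*} (E : V → V → Prop) (φ : V → V → A)
    (δ : S → A → S) : V × S → V × S → List A → Prop
  | nil (p : V × S) : PPath E φ δ p p []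
  | cons {u v : V} {s t : S} {q : V × S} {w : List A} :
      E u v → t = δ s (φ u v) → PPath E φ δ (v, t) q w →
      PPath E φ δ (u, s) q (φ u v :: w)

namespace PPath

variable {V S A : Type*} {E : V → V → Prop} {φ : V → V → A} {δ : S → A → S}

lemma snd_eq_dstar {p q : V × S} {w : List A} (h : PPath E φ δ p q w) :
    q.2 = dstar δ p.2 w := by
  induction h with
  | nil => rfl
  | cons _ ht _ ih => rw [ih, ht]; rfl

lemma replay {p q : V × S} {w : List A} (h : PPath E φ δ p q w) (s : S) :
    PPath E φ δ (p.1, s) (q.1, dstar δ s w) w := by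
  induction h generalizing s with
  | nil => exact nil _
  | cons he _ _ ih => exact cons he rfl (ih _)

lemma append {p q r : V × S} {w₁ w₂ : List A}
    (h₁ : PPath E φ δ p q w₁) (h₂ : PPath E φ δ q r w₂) :
    PPath E φ δ p r (w₁ ++ w₂) := by
  induction h₁ with
  | nil => exact h₂
  | cons he ht _ ih => exact cons he ht (ih h₂)

lemma mem_suffixLang {F : Set S} {p q : V × S} {w : List A} (h : PPath E φ δ p q w)
    (hq : q.2 ∈ F) : w ∈ suffixLang δ F p.2 :=
  show dstar δ p.2 w ∈ F from h.snd_eq_dstar ▸ hq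

lemma exists_final_of_suffixLang_subset {F : Set S} {v u : V} {s s' sf : S} {w : List A}
    (h : PPath E φ δ (v, s') (u, sf) w) (hf : sf ∈ F)
    (hsub : suffixLang δ F s' ⊆ suffixLang δ F s) :
    ∃ sf' ∈ F, PPath E φ δ (v, s) (u, sf') w :=
  ⟨dstar δ s w, hsub (h.mem_suffixLang hf), h.replay s⟩

end PPath

theorem cycle_removal_no_conflict_general {V S A : Type*}
    (E : V → V → Prop) (φ : V → V → A) (δ : S → A → S) (s₀ : S) (F : Set S)
    (x v u : V) (s₁ s₂ sf : S) (w₁ w₃ : List A)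
    (h₁ : PPath E φ δ (x, s₀) (v, s₁) w₁)
    (h₃ : PPath E φ δ (v, s₂) (u, sf) w₃)
    (hf : sf ∈ F)
    (hnoconf : suffixLang δ F s₁ ⊇ suffixLang δ F s₂) :
    ∃ sf' : S, sf' ∈ F ∧ PPath E φ δ (x, s₀) (u, sf') (w₁ ++ w₃) := by
  obtain ⟨sf', hsf', h₃'⟩ := h₃.exists_final_of_suffixLang_subset hf hnoconf
  exact ⟨sf', hsf', h₁.append h₃'⟩

/-- Cycle removal in the absence of conflicts: if an accepted path of the
product graph runs from `(x, s₀)` to `(v, s₁)`, then around a cycle back to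
vertex `v` at state `s₂`, then on to a final node `(u, s_f)`, and there is no
conflict at `v` (i.e. `[s₁] ⊇ [s₂]`), then removing the cycle between the two
occurrences of `v` yields an accepted path in the product graph from `(x, s₀)`
to a final node, with label `w₁ ++ w₃` (strictly fewer repetitions of `v`). -/
theorem cycle_removal_no_conflict {V S A : Type*}
    (E : V → V → Prop) (φ : V → V → A) (δ : S → A → S) (s₀ : S) (F : Set S)
    (x v u : V) (s₁ s₂ sf : S) (w₁ w₂ w₃ : List A)
    (h₁ : PPath E φ δ (x, s₀) (v, s₁) w₁)
    (h₂ : PPath E φ δ (v, s₁) (v, s₂) w₂)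
    (h₃ : PPath E φ δ (v, s₂) (u, sf) w₃)
    (hf : sf ∈ F)
    (hnoconf : suffixLang δ F s₁ ⊇ suffixLang δ F s₂) :
    ∃ sf' : S, sf' ∈ F ∧ PPath E φ δ (x, s₀) (u, sf') (w₁ ++ w₃) :=
  cycle_removal_no_conflict_general E φ δ s₀ F x v u s₁ s₂ sf w₁ w₃ h₁ h₃ hf hnoconf
end

section
/- In the absence of conflicts, the streaming RSPQ algorithm reports (x,u) only if there exists a simple path p in G from x to u with φ(p) ∈ L(R): formally, if the DFA A has the property that along any traversal visiting vertex v first in state s₁ and again in state s₂ we have [s₁] ⊇ [s₂], then existence of any accepted path from (x,s₀) to (u,s_f), s_f ∈ F, in the product graph implies existence of a simple path in G from x to u with label in L(A). -/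
/-- A path in `G` from `x` to `y` with label `w` visiting the vertex
sequence `vs`. -/
inductive PathVia {V A : Type*} (E : V → V → Prop) (φ : V → V → A) :
    V → V → List A → List V → Prop
  | nil (x : V) : PathVia E φ x x [] [x]
  | cons {x y z : V} {w : List A} {vs : List V} :
      E x y → PathVia E φ y z w vs → PathVia E φ x z (φ x y :: w) (x :: vs)

/-- Conflict-freedom: whenever an accepted path of the product graph starting
at `(x, s₀)` visits vertex `v` first in state `s₁` and again later in state
`s₂`, the suffix languages satisfy `[s₁] ⊇ [s₂]`. -/
def ConflictFree {V S A : Type*} (E : V → V → Prop) (φ : V → V → A)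
    (δ : S → A → S) (s₀ : S) (F : Set S) (x : V) : Prop :=
  ∀ (v u : V) (s₁ s₂ sf : S) (w₁ w₂ w₃ : List A),
    PPath E φ δ (x, s₀) (v, s₁) w₁ → PPath E φ δ (v, s₁) (v, s₂) w₂ →
    PPath E φ δ (v, s₂) (u, sf) w₃ → sf ∈ F →
    suffixLang δ F s₁ ⊇ suffixLang δ F s₂

/-!
Cut cycles out of the path one at a time. If an accepted path visits `v` first in state `s₁`
and later in state `s₂`, with remaining word `w₃`, then `w₃ ∈ [s₂] ⊆ [s₁]` by conflict-freedom,
so dropping the cycle from `v` back to `v` leaves an accepted path with fewer vertices.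
-/

theorem List.exists_eq_append_cons_append_cons_of_not_nodup {α : Type*} {l : List α}
    (h : ¬ l.Nodup) : ∃ a l₁ l₂ l₃, l = l₁ ++ a :: (l₂ ++ a :: l₃) := by
  obtain ⟨a, ha⟩ : ∃ a, List.Sublist [a, a] l := by simpa [List.nodup_iff_sublist] using h
  obtain ⟨r₁, r₂, rfl, ha₁, ha₂⟩ := List.cons_sublist_iff.1 ha
  obtain ⟨l₁, l₂, rfl⟩ := List.append_of_mem ha₁
  obtain ⟨m, l₃, rfl⟩ := List.append_of_mem (List.singleton_sublist.1 ha₂)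
  exact ⟨a, l₁, l₂ ++ m, l₃, by simp⟩

theorem dstar_append {S A : Type*} (δ : S → A → S) (s : S) (w₁ w₂ : List A) :
    dstar δ s (w₁ ++ w₂) = dstar δ (dstar δ s w₁) w₂ :=
  List.foldl_append

section Paths

variable {V S A : Type*} {E : V → V → Prop} {φ : V → V → A} {δ : S → A → S}
  {x y z : V} {w w₁ w₂ : List A} {vs : List V}

theorem PathVia.toPPath (h : PathVia E φ x y w vs) (s : S) :
    PPath E φ δ (x, s) (y, dstar δ s w) w := by
  induction h generalizing s with
  | nil => exact .nil _
  | cons hxy _ ih => exact .cons hxy rfl (ih _)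

theorem PPath.exists_pathVia {p q : V × S} (h : PPath E φ δ p q w) :
    (∃ vs, PathVia E φ p.1 q.1 w vs) ∧ q.2 = dstar δ p.2 w := by
  induction h with
  | nil p => exact ⟨⟨[p.1], .nil _⟩, rfl⟩
  | cons hxy ht _ ih =>
    obtain ⟨⟨vs, hvs⟩, hq⟩ := ih
    exact ⟨⟨_, .cons hxy hvs⟩, by rw [hq, ht]; rfl⟩

theorem PathVia.split {l₁ l₂ : List V} (h : PathVia E φ x z w (l₁ ++ y :: l₂)) :
    ∃ w₁ w₂, w = w₁ ++ w₂ ∧ PathVia E φ x y w₁ (l₁ ++ [y]) ∧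
      PathVia E φ y z w₂ (y :: l₂) := by
  induction l₁ generalizing x w with
  | nil =>
    obtain rfl : x = y := by cases h <;> rfl
    exact ⟨[], w, rfl, .nil x, h⟩
  | cons a l ih =>
    rw [List.cons_append] at h
    generalize ht : l ++ y :: l₂ = t at h
    cases h with
    | nil => simp at ht
    | cons hxy h =>
      subst ht
      obtain ⟨w₁, w₂, rfl, h₁, h₂⟩ := ih h
      exact ⟨_ :: w₁, w₂, rfl, .cons hxy h₁, h₂⟩

theorem PathVia.append {l₁ vs₂ : List V} (h₁ : PathVia E φ x y w₁ (l₁ ++ [y]))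
    (h₂ : PathVia E φ y z w₂ vs₂) : PathVia E φ x z (w₁ ++ w₂) (l₁ ++ vs₂) := by
  induction l₁ generalizing x w₁ with
  | nil =>
    cases h₁ with
    | nil => exact h₂
    | cons _ h => cases h
  | cons a l ih =>
    rw [List.cons_append] at h₁
    generalize ht : l ++ [y] = t at h₁
    cases h₁ with
    | nil => simp at ht
    | cons hxy h =>
      subst ht
      exact .cons hxy (ih h)

end Paths

section ConflictFree

variable {V S A : Type*} {E : V → V → Prop} {φ : V → V → A} {δ : S → A → S}
  {s₀ : S} {F : Set S} {x u : V} {w : List A}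

theorem ConflictFree.exists_pathVia_remove_cycle (hcf : ConflictFree E φ δ s₀ F x)
    {v : V} {l₁ l₂ l₃ : List V} (h : PathVia E φ x u w (l₁ ++ v :: (l₂ ++ v :: l₃)))
    (hw : dstar δ s₀ w ∈ F) :
    ∃ w', PathVia E φ x u w' (l₁ ++ v :: l₃) ∧ dstar δ s₀ w' ∈ F := by
  obtain ⟨w₁, w₂₃, rfl, h₁, h₂₃⟩ := h.split
  obtain ⟨w₂, w₃, rfl, h₂, h₃⟩ := h₂₃.split (l₁ := v :: l₂)
  rw [dstar_append, dstar_append] at hw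
  refine ⟨w₁ ++ w₃, h₁.append h₃, ?_⟩
  rw [dstar_append]
  exact hcf v u _ _ _ w₁ w₂ w₃ (h₁.toPPath s₀) (h₂.toPPath _) (h₃.toPPath _) hw hw

theorem ConflictFree.exists_nodup_pathVia (hcf : ConflictFree E φ δ s₀ F x) {vs : List V}
    (h : PathVia E φ x u w vs) (hw : dstar δ s₀ w ∈ F) :
    ∃ (w : List A) (vs : List V), PathVia E φ x u w vs ∧ vs.Nodup ∧ dstar δ s₀ w ∈ F := by
  induction hn : vs.length using Nat.strong_induction_on generalizing w vs with
  | _ n ih =>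
  by_cases hnd : vs.Nodup
  · exact ⟨w, vs, h, hnd, hw⟩
  obtain ⟨v, l₁, l₂, l₃, rfl⟩ := List.exists_eq_append_cons_append_cons_of_not_nodup hnd
  obtain ⟨w', h', hw'⟩ := hcf.exists_pathVia_remove_cycle h hw
  exact ih _ (by simp only [List.length_append, List.length_cons] at hn ⊢; omega) h' hw' rfl

end ConflictFree

theorem conflict_free_simple_path_general {V S A : Type*}
    (E : V → V → Prop) (φ : V → V → A) (δ : S → A → S) (s₀ : S) (F : Set S)
    (x u : V) (hcf : ConflictFree E φ δ s₀ F x)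
    (h : ∃ sf ∈ F, ∃ w : List A, PPath E φ δ (x, s₀) (u, sf) w) :
    ∃ (w : List A) (vs : List V),
      PathVia E φ x u w vs ∧ vs.Nodup ∧ dstar δ s₀ w ∈ F := by
  obtain ⟨sf, hsf, w, hp⟩ := h
  obtain ⟨⟨vs, hvs⟩, rfl⟩ := hp.exists_pathVia
  exact hcf.exists_nodup_pathVia hvs hsf

/-- In the absence of conflicts, existence of any accepted path from `(x, s₀)`
to `(u, s_f)`, `s_f ∈ F`, in the product graph implies existence of a simple
path in `G` from `x` to `u` whose label is in `L(A)`. -/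
theorem conflict_free_simple_path {V S A : Type*} [Finite V]
    (E : V → V → Prop) (φ : V → V → A) (δ : S → A → S) (s₀ : S) (F : Set S)
    (x u : V) (hcf : ConflictFree E φ δ s₀ F x)
    (h : ∃ sf ∈ F, ∃ w : List A, PPath E φ δ (x, s₀) (u, sf) w) :
    ∃ (w : List A) (vs : List V),
      PathVia E φ x u w vs ∧ vs.Nodup ∧ dstar δ s₀ w ∈ F :=
  conflict_free_simple_path_general E φ δ s₀ F x u hcf h
end
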